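/- arXiv:2008.07233 — 2 statements merged into one kernel-verified Lean document; each statement's English description precedes it below -/
import Mathlib

section
/- Let M = M(Σ,I) be a trace monoid on a finite alphabet Σ, and let u ∈ M. Then any left divisor x ≤ u is uniquely determined by its image in the free commutative monoid on Σ, i.e., by the tuple of occurrence counts (n_a)_{a∈Σ} where n_a is the number of occurrences of the letter a in x. -/
open scoped Classical

section TracePre

variable {A : Type*}

/-- The elementary swap relation from an independence relation. -/
def swapRel (I : A → A → Prop) : FreeMonoid A → FreeMonoid A → Prop :=
  fun x y => ∃ a b, I a b ∧ x = FreeMonoid.of a * FreeMonoid.of b ∧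
    y = FreeMonoid.of b * FreeMonoid.of a

/-- The congruence generated by the commutations. -/
def traceCon (I : A → A → Prop) : Con (FreeMonoid A) := conGen (swapRel I)

/-- The trace monoid `M(A, I)`. -/
abbrev TraceMonoid (A : Type*) (I : A → A → Prop) := (traceCon I).Quotient

/-- Image of a letter in the trace monoid. -/
def trOf (I : A → A → Prop) (a : A) : TraceMonoid A I := (traceCon I).mk' (FreeMonoid.of a)

theorem traceCon_le_ker {M : Type*} [CommMonoid M] {I : A → A → Prop}
    (φ : FreeMonoid A →* M) : traceCon I ≤ Con.ker φ := by
  refine Con.conGen_le.2 fun x y h => ?_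
  obtain ⟨a, b, _, rfl, rfl⟩ := h
  simp [Con.ker_rel, map_mul, mul_comm]

/-- Length of a trace. -/
noncomputable def trLen {I : A → A → Prop} (x : TraceMonoid A I) : ℕ :=
  Multiplicative.toAdd
    ((Con.lift (traceCon I) (FreeMonoid.lift fun _ => Multiplicative.ofAdd (1 : ℕ))
      (traceCon_le_ker _)) x)

/-- Number of occurrences of the letter `a` in a trace. -/
noncomputable def trCount {I : A → A → Prop} (a : A) (x : TraceMonoid A I) : ℕ :=
  Multiplicative.toAdd
    ((Con.lift (traceCon I)
      (FreeMonoid.lift fun b => Multiplicative.ofAdd (if b = a then (1 : ℕ) else 0))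
      (traceCon_le_ker _)) x)

/-- Lists of pairwise distinct, pairwise independent letters. -/
def IsCliqueList (I : A → A → Prop) (l : List A) : Prop :=
  l.Pairwise fun a b => a ≠ b ∧ I a b

/-- The trace associated with a list of letters. -/
def listProd (I : A → A → Prop) (l : List A) : TraceMonoid A I := (l.map (trOf I)).prod

/-- A clique of the trace monoid. -/
def IsClique (I : A → A → Prop) (x : TraceMonoid A I) : Prop :=
  ∃ l, IsCliqueList I l ∧ x = listProd I l

/-- The trace associated with a finite set of letters. -/
noncomputable def fprod (I : A → A → Prop) (c : Finset A) : TraceMonoid A I :=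
  listProd I c.toList

/-- Normal pairs of cliques, cliques being represented by finite sets of letters. -/
def NormalF (I : A → A → Prop) (c d : Finset A) : Prop :=
  ∀ b ∈ d, ∃ a ∈ c, (¬ I a b ∨ a = b)

/-- Greatest lower bound for left divisibility. -/
def IsGlbDvd {M : Type*} [Monoid M] (x y g : M) : Prop :=
  g ∣ x ∧ g ∣ y ∧ ∀ w, w ∣ x → w ∣ y → w ∣ g

/-- Least upper bound for left divisibility. -/
def IsLubDvd {M : Type*} [Monoid M] (x y z : M) : Prop :=
  x ∣ z ∧ y ∣ z ∧ ∀ w, x ∣ w → y ∣ w → z ∣ w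

end TracePre

section CSPre

variable {A X : Type*}

/-- A concurrent system: a right action of a trace monoid on `X ∪ {⊥}`,
`⊥` being encoded by `none`. -/
structure CS (A : Type*) (I : A → A → Prop) (X : Type*) where
  act : Option X → TraceMonoid A I → Option X
  act_one : ∀ s, act s 1 = s
  act_mul : ∀ s x y, act s (x * y) = act (act s x) y
  act_bot : ∀ x, act none x = none

variable {I : A → A → Prop}

/-- The letter `a` is enabled at state `α`. -/
def CS.Enabled (S : CS A I X) (α : X) (a : A) : Prop := S.act (some α) (trOf I a) ≠ none

/-- The set of executions starting from `α`. -/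
def CS.MSet (S : CS A I X) (α : X) : Set (TraceMonoid A I) :=
  {x | S.act (some α) x ≠ none}

/-- A deterministic concurrent system: any two letters enabled at a common state
commute. -/
def CS.Deterministic (S : CS A I X) : Prop :=
  ∀ (α : X) (a b : A), a ≠ b → S.Enabled α a → S.Enabled α b → I a b

/-- The finite set of letters enabled at an extended state. -/
noncomputable def CS.enabledFinset [Fintype A] (S : CS A I X) (s : Option X) : Finset A :=
  Finset.univ.filter fun a => S.act s (trOf I a) ≠ none

/-- A generalised execution from `α`, as an infinite normal sequence of cliques
all of whose finite prefixes are executions. -/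
def CS.IsGenExec (S : CS A I X) (α : X) (c : ℕ → Finset A) : Prop :=
  (∀ i, (↑(c i) : Set A).Pairwise I) ∧ (∀ i, NormalF I (c i) (c (i + 1))) ∧
    ∀ k, S.act (some α) (((List.range k).map fun i => fprod I (c i)).prod) ≠ none

/-- An infinite execution from `α`: a generalised execution with all cliques nonempty. -/
def CS.IsInfExec (S : CS A I X) (α : X) (c : ℕ → Finset A) : Prop :=
  S.IsGenExec α c ∧ ∀ i, c i ≠ ∅

end CSPre

/-!
Words representing the same trace are connected by swaps of adjacent independent letters.
Following one letter `a` through such swaps shows: if `a w` and `v` represent the same trace,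
then `v = v₁ a v₂` where every letter of `v₁` is independent of `a` (so differs from `a`), and
`w` represents the same trace as `v₁ v₂`. Hence letters are left cancellable, and if `a ≤ u`,
`y ≤ u` and `a` occurs in `y`, then `a ≤ y`. Peeling off the first letter of `x` one at a time
then turns equal letter counts into `x = y`.
-/

open Relation FreeMonoid

section

variable {A : Type*} {I : A → A → Prop}

inductive SwapStep (I : A → A → Prop) : List A → List A → Prop
  | swap (a b : A) (l : List A) : I a b → SwapStep I (a :: b :: l) (b :: a :: l)
  | cons (c : A) {l l' : List A} : SwapStep I l l' → SwapStep I (c :: l) (c :: l')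

namespace SwapStep

theorem append_right {l l' : List A} (h : SwapStep I l l') (s : List A) :
    SwapStep I (l ++ s) (l' ++ s) := by
  induction h with
  | swap a b t hI => exact .swap a b (t ++ s) hI
  | cons c _ ih => exact .cons c ih

theorem symm (hsym : Symmetric I) {l l' : List A} (h : SwapStep I l l') : SwapStep I l' l := by
  induction h with
  | swap a b t hI => exact .swap b a t (hsym hI)
  | cons c _ ih => exact .cons c ih

theorem exists_independent_prefix {a : A} {v v' : List A} (h : SwapStep I v v') :
    ∀ {v₁ v₂ : List A}, v = v₁ ++ a :: v₂ → (∀ b ∈ v₁, I a b) →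
      ∃ w₁ w₂, v' = w₁ ++ a :: w₂ ∧ (∀ b ∈ w₁, I a b) ∧
        ReflTransGen (SwapStep I) (v₁ ++ v₂) (w₁ ++ w₂) := by
  induction h with
  | swap c d l hI =>
    rintro (_ | ⟨e, _ | ⟨f, t⟩⟩) v₂ hv hv₁
    · obtain ⟨rfl, rfl⟩ := List.cons.inj hv
      exact ⟨[d], l, rfl, by simpa using hI, .refl⟩
    · simp only [List.cons_append, List.nil_append, List.cons.injEq] at hv
      obtain ⟨rfl, rfl, rfl⟩ := hv
      exact ⟨[], _, rfl, by simp, .refl⟩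
    · simp only [List.cons_append, List.cons.injEq] at hv
      obtain ⟨rfl, rfl, rfl⟩ := hv
      refine ⟨d :: c :: t, v₂, rfl, fun b hb => hv₁ b ?_, .single (.swap c d _ hI)⟩
      simp only [List.mem_cons] at hb ⊢
      tauto
  | cons c hstep ih =>
    rintro (_ | ⟨e, t⟩) v₂ hv hv₁
    · obtain ⟨rfl, rfl⟩ := List.cons.inj hv
      exact ⟨[], _, rfl, by simp, .single hstep⟩
    · obtain ⟨rfl, rfl⟩ := List.cons.inj hv
      obtain ⟨w₁, w₂, rfl, hw₁, hch⟩ :=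
        ih rfl fun b hb => hv₁ b (List.mem_cons_of_mem _ hb)
      refine ⟨c :: w₁, w₂, rfl, ?_, hch.lift (c :: ·) fun _ _ => .cons c⟩
      simpa [hv₁ c] using hw₁

end SwapStep

theorem reflTransGen_swapStep_append_left (p : List A) {l l' : List A}
    (h : ReflTransGen (SwapStep I) l l') : ReflTransGen (SwapStep I) (p ++ l) (p ++ l') := by
  induction p with
  | nil => exact h
  | cons c p ih => exact ih.lift (c :: ·) fun _ _ => .cons c

theorem reflTransGen_swapStep_append_right {l l' : List A}
    (h : ReflTransGen (SwapStep I) l l') (s : List A) :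
    ReflTransGen (SwapStep I) (l ++ s) (l' ++ s) :=
  h.lift (· ++ s) fun _ _ hs => hs.append_right s

theorem exists_independent_prefix_of_reflTransGen_cons {a : A} {w v : List A}
    (h : ReflTransGen (SwapStep I) (a :: w) v) :
    ∃ v₁ v₂, v = v₁ ++ a :: v₂ ∧ (∀ b ∈ v₁, I a b) ∧
      ReflTransGen (SwapStep I) w (v₁ ++ v₂) := by
  induction h with
  | refl => exact ⟨[], w, rfl, by simp, .refl⟩
  | tail _ hstep ih =>
    obtain ⟨v₁, v₂, rfl, hv₁, hch⟩ := ih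
    obtain ⟨w₁, w₂, rfl, hw₁, hch'⟩ := hstep.exists_independent_prefix rfl hv₁
    exact ⟨w₁, w₂, rfl, hw₁, hch.trans hch'⟩

theorem reflTransGen_swapStep_move_front (hsym : Symmetric I) {a : A} {l : List A}
    (h : ∀ b ∈ l, I a b) (r : List A) :
    ReflTransGen (SwapStep I) (l ++ a :: r) (a :: (l ++ r)) := by
  induction l with
  | nil => exact .refl
  | cons c t ih =>
    have hc : SwapStep I (c :: a :: (t ++ r)) (a :: c :: (t ++ r)) :=
      .swap c a _ (hsym (h c (by simp)))
    exact (ih fun b hb => h b (List.mem_cons_of_mem _ hb)).lift (c :: ·) (fun _ _ => .cons c)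
      |>.tail hc

@[simp]
theorem listProd_cons (a : A) (l : List A) :
    listProd I (a :: l) = trOf I a * listProd I l := by
  simp [listProd]

theorem listProd_eq_mk (l : List A) : listProd I l = (traceCon I).mk' (ofList l) := by
  induction l with
  | nil => rfl
  | cons a l ih => rw [listProd_cons, ih, ofList_cons, map_mul]; rfl

theorem listProd_surjective : Function.Surjective (listProd I) := fun x => by
  obtain ⟨w, rfl⟩ := Con.mk'_surjective x
  exact ⟨toList w, by rw [listProd_eq_mk, ofList_toList]⟩

theorem listProd_append (l l' : List A) :
    listProd I (l ++ l') = listProd I l * listProd I l' := by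
  simp [listProd]

theorem SwapStep.listProd_eq {l l' : List A} (h : SwapStep I l l') :
    listProd I l = listProd I l' := by
  induction h with
  | swap a b t hI =>
    have hab : trOf I a * trOf I b = trOf I b * trOf I a :=
      (traceCon I).eq.2 (ConGen.Rel.of _ _ ⟨a, b, hI, rfl, rfl⟩)
    simp only [listProd_cons, ← mul_assoc, hab]
  | cons c _ ih => simp only [listProd_cons, ih]

theorem reflTransGen_swapStep_of_traceCon (hsym : Symmetric I) {x y : FreeMonoid A}
    (h : traceCon I x y) : ReflTransGen (SwapStep I) (toList x) (toList y) := by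
  induction h with
  | of x y hr =>
    obtain ⟨a, b, hI, rfl, rfl⟩ := hr
    exact .single (.swap a b [] hI)
  | refl x => exact .refl
  | symm _ ih => exact ReflTransGen.mono (fun _ _ hs => hs.symm hsym) _ _ (reflTransGen_swap.2 ih)
  | trans _ _ ih₁ ih₂ => exact ih₁.trans ih₂
  | mul _ _ ih₁ ih₂ =>
    rw [toList_mul, toList_mul]
    exact (reflTransGen_swapStep_append_right ih₁ _).trans
      (reflTransGen_swapStep_append_left _ ih₂)

theorem listProd_eq_listProd_iff (hsym : Symmetric I) {l l' : List A} :
    listProd I l = listProd I l' ↔ ReflTransGen (SwapStep I) l l' := by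
  refine ⟨fun h => ?_, fun h => ?_⟩
  · rw [listProd_eq_mk, listProd_eq_mk] at h
    simpa using reflTransGen_swapStep_of_traceCon hsym ((traceCon I).eq.1 h)
  · induction h with
    | refl => rfl
    | tail _ hs ih => exact ih.trans hs.listProd_eq

@[simp]
theorem trCount_mul (a : A) (x y : TraceMonoid A I) :
    trCount a (x * y) = trCount a x + trCount a y := by
  simp [trCount]

@[simp]
theorem trCount_trOf (a b : A) : trCount a (trOf I b) = if b = a then 1 else 0 := by
  simp [trCount, trOf]

theorem trCount_listProd (a : A) (l : List A) : trCount a (listProd I l) = l.count a := by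
  induction l with
  | nil => rfl
  | cons b l ih => simp [ih, List.count_cons, add_comm]

theorem isLeftRegular_trOf (hsym : Symmetric I) (hirr : Irreflexive I) (a : A) :
    IsLeftRegular (trOf I a) := by
  intro x y (h : trOf I a * x = trOf I a * y)
  obtain ⟨l, rfl⟩ := listProd_surjective x
  obtain ⟨l', rfl⟩ := listProd_surjective y
  rw [← listProd_cons, ← listProd_cons, listProd_eq_listProd_iff hsym] at h
  obtain ⟨_ | ⟨c, v₁⟩, v₂, hsplit, hv₁, hch⟩ :=
    exists_independent_prefix_of_reflTransGen_cons h
  · obtain ⟨-, rfl⟩ := List.cons.inj hsplit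
    exact (listProd_eq_listProd_iff hsym).2 hch
  · obtain ⟨rfl, -⟩ := List.cons.inj hsplit
    exact absurd (hv₁ a (by simp)) (hirr a)

theorem trOf_dvd_of_dvd_of_trCount_ne_zero (hsym : Symmetric I) (hirr : Irreflexive I)
    {a : A} {u y : TraceMonoid A I} (hau : trOf I a ∣ u) (hyu : y ∣ u)
    (hy : trCount a y ≠ 0) : trOf I a ∣ y := by
  obtain ⟨t, rfl⟩ := hyu
  obtain ⟨s, hs⟩ := hau
  obtain ⟨m, rfl⟩ := listProd_surjective y
  obtain ⟨n, rfl⟩ := listProd_surjective t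
  obtain ⟨k, rfl⟩ := listProd_surjective s
  rw [eq_comm, ← listProd_cons, ← listProd_append, listProd_eq_listProd_iff hsym] at hs
  obtain ⟨v₁, v₂, hsplit, hv₁, -⟩ := exists_independent_prefix_of_reflTransGen_cons hs
  have ha : a ∈ m := by simpa [trCount_listProd, List.count_eq_zero] using hy
  -- `a ∉ v₁` by irreflexivity, so the occurrence of `a` in `m` lies beyond `v₁`
  obtain ⟨r, rfl⟩ : ∃ r, m = v₁ ++ a :: r := by
    rcases List.append_eq_append_iff.1 hsplit.symm with
      ⟨_ | ⟨c, r⟩, rfl, h⟩ | ⟨c', rfl, -⟩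
    · simp only [List.append_nil] at ha
      exact absurd (hv₁ a ha) (hirr a)
    · obtain ⟨rfl, -⟩ := List.cons.inj h
      exact ⟨r, rfl⟩
    · exact absurd (hv₁ a (List.mem_append_left _ ha)) (hirr a)
  refine ⟨listProd I (v₁ ++ r), ?_⟩
  rw [← listProd_cons, listProd_eq_listProd_iff hsym]
  exact reflTransGen_swapStep_move_front hsym hv₁ r

end

theorem stmt1_general {A : Type*} {I : A → A → Prop}
    (hsym : Symmetric I) (hirr : Irreflexive I)
    (u x y : TraceMonoid A I) (hx : x ∣ u) (hy : y ∣ u)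
    (hcount : ∀ a : A, trCount a x = trCount a y) :
    x = y := by
  obtain ⟨l, rfl⟩ := listProd_surjective x
  induction l generalizing u y with
  | nil =>
    obtain ⟨m, rfl⟩ := listProd_surjective y
    simp only [trCount_listProd, List.count_nil] at hcount
    rw [List.eq_nil_iff_forall_not_mem.2 fun a ha => (List.count_pos_iff.2 ha).ne' (hcount a).symm]
  | cons a l ih =>
    rw [listProd_cons] at hx hcount ⊢
    have hau : trOf I a ∣ u := dvd_of_mul_right_dvd hx
    obtain ⟨y', rfl⟩ :=
      trOf_dvd_of_dvd_of_trCount_ne_zero hsym hirr hau hy (by simp [← hcount])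
    obtain ⟨u', rfl⟩ := hau
    have hreg := isLeftRegular_trOf hsym hirr a
    rw [ih u' y' (hreg.dvd_cancel_left.1 hy) (hreg.dvd_cancel_left.1 hx)
      fun b => by simpa using hcount b]

/-- a left divisor `x` of a trace `u` is uniquely determined by its
occurrence counts `(trCount a x)_{a ∈ Σ}`, i.e. by its image in the free
commutative monoid on `Σ`. -/
theorem stmt1 {A : Type*} [Fintype A] {I : A → A → Prop}
    (hsym : Symmetric I) (hirr : Irreflexive I)
    (u x y : TraceMonoid A I) (hx : x ∣ u) (hy : y ∣ u)
    (hcount : ∀ a : A, trCount a x = trCount a y) :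
    x = y :=
  stmt1_general hsym hirr u x y hx hy hcount
end

section
/- Let M = M(Σ,I) be a trace monoid with Σ nonempty. The Möbius polynomial μ(z) = Σ_{c ∈ 𝒞} (−1)^{|c|} z^{|c|} (sum over all cliques c, including the empty clique) satisfies: μ(z) has a root of modulus smaller than or equal to 1; moreover, the smallest positive real root r of μ satisfies r ≥ 1 if and only if M is commutative (i.e., I = (Σ×Σ)∖Δ where Δ is the diagonal). -/
open scoped Classical

/-! Write `μ_B` for the Möbius polynomial of the sub-alphabet `B`. Removing a letter `x` gives
`μ_{B ∪ {x}} = μ_B - t μ_{B ∩ N(x)}`, where `N(x)` is the set of letters commuting with `x`, so at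
every `t ≥ 0` where all the `μ_C` are nonnegative, `μ_B` is antitone in `B`. If two distinct
letters `a, b` do not commute, `μ_{a,b} = 1 - 2t` vanishes at `1/2`; at the least `T > 0` where
some `μ_C` vanishes, all `μ_C` are still nonnegative (they start at `1`), so
`0 ≤ μ_Σ(T) ≤ μ_C(T) = 0`, whence `r ≤ T ≤ 1/2`. In the commutative case `μ = (1 - t)^|Σ|` and
`r = 1`. Either way `r ≤ 1` is itself a root of modulus at most `1`. -/

open Finset

section CliquePoly

variable {A R : Type*}

/-- The Möbius polynomial `μ_B` of the sub-alphabet `B`, as a function on `R`. -/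
noncomputable def cliquePoly [CommRing R] (I : A → A → Prop) (B : Finset A) (t : R) : R :=
  ∑ c ∈ B.powerset, if (c : Set A).Pairwise I then (-t) ^ #c else 0

section CommRing

variable [CommRing R] {I : A → A → Prop} {B : Finset A} {t : R}

theorem cliquePoly_empty : cliquePoly I ∅ t = 1 := by
  simp [cliquePoly]

theorem cliquePoly_zero : cliquePoly I B (0 : R) = 1 := by
  rw [cliquePoly, sum_eq_single_of_mem ∅ (empty_mem_powerset B)]
  · simp
  · intro c _ hc
    simp [zero_pow (card_ne_zero.2 (nonempty_iff_ne_empty.2 hc))]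

theorem map_cliquePoly {S : Type*} [CommRing S] (f : R →+* S) :
    f (cliquePoly I B t) = cliquePoly I B (f t) := by
  simp [cliquePoly, apply_ite f]

theorem cliquePoly_insert {x : A} (hx : x ∉ B) :
    cliquePoly I (insert x B) t =
      cliquePoly I B t - t * cliquePoly I {y ∈ B | I x y ∧ I y x} t := by
  suffices h : ∑ c ∈ B.powerset,
      (if (↑(insert x c) : Set A).Pairwise I then (-t) ^ #(insert x c) else 0) =
      -(t * ∑ c ∈ {y ∈ B | I x y ∧ I y x}.powerset,
        if (c : Set A).Pairwise I then (-t) ^ #c else 0) by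
    rw [cliquePoly, sum_powerset_insert hx, h, cliquePoly, cliquePoly, sub_eq_add_neg]
  have hsub : {y ∈ B | I x y ∧ I y x}.powerset ⊆ B.powerset := powerset_mono.2 (filter_subset _ B)
  rw [mul_sum, ← sum_neg_distrib, ← sum_subset hsub]
  · refine sum_congr rfl fun c hc => ?_
    have hcB : c ⊆ B := (mem_powerset.1 hc).trans (filter_subset _ B)
    have hxc : x ∉ c := fun h => hx (hcB h)
    have hpair : (↑(insert x c) : Set A).Pairwise I ↔ (c : Set A).Pairwise I := by
      rw [coe_insert, Set.pairwise_insert_of_notMem hxc, and_iff_left_iff_imp]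
      exact fun _ y hy => (mem_filter.1 (mem_powerset.1 hc hy)).2
    simp only [hpair, card_insert_of_notMem hxc]
    split_ifs <;> ring
  · intro c hc hc'
    have hxc : x ∉ c := fun h => hx (mem_powerset.1 hc h)
    refine if_neg fun hpair => hc' (mem_powerset.2 fun y hy =>
      mem_filter.2 ⟨mem_powerset.1 hc hy, ?_⟩)
    rw [coe_insert, Set.pairwise_insert_of_notMem hxc] at hpair
    exact hpair.2 y hy

theorem cliquePoly_of_forall_ne (hI : ∀ a b, a ≠ b → I a b) :
    cliquePoly I B t = (1 - t) ^ #B := by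
  have hpair (c : Finset A) : (c : Set A).Pairwise I := fun a _ b _ hab => hI a b hab
  rw [sub_eq_neg_add, ← sum_pow_mul_eq_add_pow]
  simp [cliquePoly, hpair]

theorem cliquePoly_pair {a b : A} (hab : a ≠ b) (hI : ¬ I a b) :
    cliquePoly I {a, b} t = 1 - 2 * t := by
  rw [cliquePoly_insert (by simpa using hab), ← insert_empty, cliquePoly_insert (notMem_empty b)]
  simp only [cliquePoly_empty, filter_empty, mul_one, insert_empty_eq, filter_singleton, hI,
    false_and, ↓reduceIte]
  ring

end CommRing

section Real

variable {I : A → A → Prop}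

theorem continuous_cliquePoly {B : Finset A} : Continuous (cliquePoly I B : ℝ → ℝ) := by
  refine continuous_finsetSum _ fun c _ => ?_
  split_ifs <;> fun_prop

theorem antitone_cliquePoly {t : ℝ} (ht : 0 ≤ t) (hnonneg : ∀ C, 0 ≤ cliquePoly I C t) :
    Antitone fun B => cliquePoly I B t := by
  have hinsert (x : A) (B : Finset A) : cliquePoly I (insert x B) t ≤ cliquePoly I B t := by
    by_cases hx : x ∈ B
    · rw [insert_eq_of_mem hx]
    · rw [cliquePoly_insert hx]
      linarith [mul_nonneg ht (hnonneg {y ∈ B | I x y ∧ I y x})]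
  intro B D hBD
  suffices ∀ E, cliquePoly I (B ∪ E) t ≤ cliquePoly I B t by
    simpa [union_eq_right.2 hBD] using this D
  intro E
  induction E using Finset.induction_on with
  | empty => simp
  | insert x E _ ih => exact (union_insert x B E ▸ hinsert x (B ∪ E)).trans ih

theorem exists_mem_Ioo_cliquePoly_eq_zero {C : Finset A} {t : ℝ} (ht : 0 ≤ t)
    (hneg : cliquePoly I C t < 0) : ∃ s ∈ Set.Ioo 0 t, cliquePoly I C s = 0 :=
  intermediate_value_Ioo' ht continuous_cliquePoly.continuousOn
    ⟨hneg, by simp [cliquePoly_zero]⟩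

theorem exists_root_cliquePoly_univ [Fintype A] {a b : A} (hab : a ≠ b) (hI : ¬ I a b) :
    ∃ t ∈ Set.Ioc (0 : ℝ) (1 / 2), cliquePoly I univ t = 0 := by
  set Z : Set ℝ := Set.Icc 0 (1 / 2) ∩ ⋃ C : Finset A, {t | cliquePoly I C t = 0}
  have hZ_closed : IsClosed Z := isClosed_Icc.inter <|
    isClosed_iUnion_of_finite fun C => isClosed_eq continuous_cliquePoly continuous_const
  have hZ_bdd : BddBelow Z := ⟨0, fun t ht => ht.1.1⟩
  have hZ_half : (1 / 2 : ℝ) ∈ Z :=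
    ⟨⟨by norm_num, le_rfl⟩, Set.mem_iUnion.2 ⟨{a, b}, by simp [cliquePoly_pair hab hI]⟩⟩
  obtain ⟨⟨hT0, hT_half⟩, hT_root⟩ := hZ_closed.csInf_mem ⟨_, hZ_half⟩ hZ_bdd
  obtain ⟨C₀, hC₀⟩ := Set.mem_iUnion.1 hT_root
  have hTpos : 0 < sInf Z := hT0.lt_of_ne fun h => by
    simp [← h, cliquePoly_zero] at hC₀
  -- a negative value at `sInf Z` would force a root in `(0, sInf Z)`
  have hnonneg (C : Finset A) : 0 ≤ cliquePoly I C (sInf Z) := not_lt.1 fun hneg => by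
    obtain ⟨s, ⟨hs0, hsT⟩, hs⟩ := exists_mem_Ioo_cliquePoly_eq_zero hT0 hneg
    exact (csInf_le hZ_bdd ⟨⟨hs0.le, hsT.le.trans hT_half⟩, Set.mem_iUnion.2 ⟨C, hs⟩⟩).not_gt hsT
  refine ⟨sInf Z, ⟨hTpos, hT_half⟩, le_antisymm ?_ (hnonneg univ)⟩
  exact (antitone_cliquePoly hT0 hnonneg (subset_univ C₀)).trans hC₀.le

end Real

end CliquePoly

theorem stmt6_general {A : Type*} [Fintype A] [DecidableEq A] {I : A → A → Prop}
    (μR : ℝ → ℝ)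
    (hμR : ∀ z, μR z = ∑ c : Finset A,
      if (↑c : Set A).Pairwise I then (-1 : ℝ) ^ c.card * z ^ c.card else 0)
    (μC : ℂ → ℂ)
    (hμC : ∀ z, μC z = ∑ c : Finset A,
      if (↑c : Set A).Pairwise I then (-1 : ℂ) ^ c.card * z ^ c.card else 0)
    (r : ℝ) (hrpos : 0 < r) (hroot : μR r = 0)
    (hmin : ∀ s : ℝ, 0 < s → μR s = 0 → r ≤ s) :
    (∃ z : ℂ, μC z = 0 ∧ ‖z‖ ≤ 1) ∧
      (1 ≤ r ↔ ∀ a b : A, a ≠ b → I a b) := by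
  have hμR' (z : ℝ) : μR z = cliquePoly I univ z := by
    simp only [hμR, cliquePoly, powerset_univ, neg_pow z]
  have hμC' (z : ℂ) : μC z = cliquePoly I univ z := by
    simp only [hμC, cliquePoly, powerset_univ, neg_pow z]
  have hcomm : (∀ a b : A, a ≠ b → I a b) → r = 1 := fun h => by
    rw [hμR', cliquePoly_of_forall_ne h] at hroot
    linarith [eq_zero_of_pow_eq_zero hroot]
  have hncomm : ¬ (∀ a b : A, a ≠ b → I a b) → r ≤ 1 / 2 := fun h => by
    simp only [not_forall] at h
    obtain ⟨a, b, hab, hI⟩ := h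
    obtain ⟨t, ⟨ht0, ht⟩, ht_root⟩ := exists_root_cliquePoly_univ hab hI
    exact (hmin t ht0 (hμR' t ▸ ht_root)).trans ht
  have hr_le : r ≤ 1 := by
    by_cases h : ∀ a b : A, a ≠ b → I a b
    · exact (hcomm h).le
    · linarith [hncomm h]
  refine ⟨⟨r, ?_, ?_⟩, fun h1 => by_contra fun h => ?_, fun h => (hcomm h).ge⟩
  · rw [hμC', ← Complex.ofRealHom_eq_coe, ← map_cliquePoly, ← hμR', hroot, map_zero]
  · simpa [abs_of_pos hrpos] using hr_le
  · linarith [hncomm h]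

/-- the Möbius polynomial of a trace monoid on a nonempty alphabet has
a (complex) root of modulus at most 1, and its smallest positive real root `r`
satisfies `r ≥ 1` iff the monoid is commutative, i.e. `I` relates all pairs of
distinct letters. -/
theorem stmt6 {A : Type*} [Fintype A] [DecidableEq A] [Nonempty A] {I : A → A → Prop}
    (hsym : Symmetric I) (hirr : Irreflexive I)
    (μR : ℝ → ℝ)
    (hμR : ∀ z, μR z = ∑ c : Finset A,
      if (↑c : Set A).Pairwise I then (-1 : ℝ) ^ c.card * z ^ c.card else 0)
    (μC : ℂ → ℂ)
    (hμC : ∀ z, μC z = ∑ c : Finset A,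
      if (↑c : Set A).Pairwise I then (-1 : ℂ) ^ c.card * z ^ c.card else 0)
    (r : ℝ) (hrpos : 0 < r) (hroot : μR r = 0)
    (hmin : ∀ s : ℝ, 0 < s → μR s = 0 → r ≤ s) :
    (∃ z : ℂ, μC z = 0 ∧ ‖z‖ ≤ 1) ∧
      (1 ≤ r ↔ ∀ a b : A, a ≠ b → I a b) :=
  stmt6_general μR hμR μC hμC r hrpos hroot hmin
end
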